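/- arXiv:0905.3736 — 4 statements merged into one kernel-verified Lean document; each statement's English description precedes it below -/
import Mathlib

section
/- Let (X, μ) be a finite measure space, T : X → X a measure-preserving map that is ergodic with respect to μ, and f : X → ℤ an integrable function. Define the skew product S : X × ℤ → X × ℤ by S(x, k) = (T x, k + f x), where X × ℤ carries the measure μ ⊗ c with c the counting measure on ℤ. Then S preserves the measure μ ⊗ c, and S is conservative (recurrent, i.e. almost every point of every measurable set returns to that set under iteration of S) if and only if ∫ f dμ = 0. -/
open MeasureTheory Filter Set Function Topology

set_option linter.unusedSectionVars false

namespace SchmidtAux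

instance : SFinite (Measure.count : Measure ℤ) := by rw [Measure.count]; infer_instance

lemma count_pre (a : ℤ) (s : Set ℤ) : Measure.count ((fun k => k + a) ⁻¹' s) = Measure.count s := by
  have h1 : (fun k : ℤ => k + a) ⁻¹' s = (fun k : ℤ => k - a) '' s := by
    ext k
    constructor
    · intro h; exact ⟨k + a, h, by ring⟩
    · rintro ⟨y, hy, rfl⟩; simpa using hy
  rw [h1, Measure.count_injective_image (fun x y h => by simpa using h)]

variable {X : Type*} [MeasurableSpace X] {μ : Measure X} [IsFiniteMeasure μ] {T : X → X} {g : X → ℝ}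

lemma skew_mp (μ : Measure X) [SFinite μ] (T : X → X) (hT : MeasurePreserving T μ μ) (f : X → ℤ) (hf : Measurable f) :
    MeasurePreserving (fun p : X × ℤ => (T p.1, p.2 + f p.1))
      (μ.prod Measure.count) (μ.prod Measure.count) := by
  have hS1m : Measurable (fun p : X × ℤ => (p.1, p.2 + f p.1)) :=
    measurable_fst.prodMk (measurable_snd.add (hf.comp measurable_fst))
  have hS1 : MeasurePreserving (fun p : X × ℤ => (p.1, p.2 + f p.1))
      (μ.prod Measure.count) (μ.prod Measure.count) := by
    refine ⟨hS1m, ?_⟩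
    ext E hE
    rw [Measure.map_apply hS1m hE, Measure.prod_apply (hS1m hE), Measure.prod_apply hE]
    refine lintegral_congr fun x => ?_
    have : (Prod.mk x ⁻¹' ((fun p : X × ℤ => (p.1, p.2 + f p.1)) ⁻¹' E))
        = (fun k : ℤ => k + f x) ⁻¹' (Prod.mk x ⁻¹' E) := rfl
    rw [this, count_pre]
  have hS2 : MeasurePreserving (Prod.map T (id : ℤ → ℤ))
      (μ.prod Measure.count) (μ.prod Measure.count) :=
    hT.prod (MeasurePreserving.id _)
  have : (fun p : X × ℤ => (T p.1, p.2 + f p.1))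
      = (Prod.map T (id : ℤ → ℤ)) ∘ (fun p : X × ℤ => (p.1, p.2 + f p.1)) := rfl
  rw [this]
  exact hS2.comp hS1

lemma skew_iterate (T : X → X) (f : X → ℤ) (n : ℕ) (p : X × ℤ) :
    (fun p : X × ℤ => (T p.1, p.2 + f p.1))^[n] p = (T^[n] p.1, p.2 + birkhoffSum T f n p.1) := by
  induction n generalizing p with
  | zero => simp
  | succ n ih =>
    rw [Function.iterate_succ_apply, ih]
    simp only [birkhoffSum_succ' T f n p.1]
    rw [← Function.iterate_succ_apply T]
    rw [add_assoc]

lemma slice_pos (μ : Measure X) [SFinite μ] {E : Set (X × ℤ)} (hE : MeasurableSet E)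
    (h : μ.prod Measure.count E ≠ 0) : ∃ k : ℤ, μ {x | (x, k) ∈ E} ≠ 0 := by
  by_contra h'
  push_neg at h'
  apply h
  rw [Measure.prod_apply hE]
  rw [lintegral_eq_zero_iff (measurable_measure_prodMk_left hE)]
  have : ∀ᵐ x ∂μ, ∀ k : ℤ, x ∉ {x | (x, k) ∈ E} := by
    rw [ae_all_iff]
    intro k
    exact (measure_eq_zero_iff_ae_notMem).mp (h' k)
  filter_upwards [this] with x hx
  have : (Prod.mk x ⁻¹' E) = ∅ := by
    ext k; simp only [Set.mem_preimage, Set.mem_empty_iff_false, iff_false]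
    exact hx k
  simp [this]

/-- running maximum `M N x = max_{0 ≤ n ≤ N} birkhoffSum T g n x`. -/
noncomputable def runMax (T : X → X) (g : X → ℝ) : ℕ → X → ℝ
  | 0 => fun _ => 0
  | (N+1) => fun x => max (runMax T g N x) (birkhoffSum T g (N+1) x)

lemma runMax_nonneg (N : ℕ) (x : X) : 0 ≤ runMax T g N x := by
  induction N with
  | zero => simp [runMax]
  | succ N ih => exact le_trans ih (le_max_left _ _)

lemma runMax_mono (N : ℕ) (x : X) : runMax T g N x ≤ runMax T g (N+1) x := le_max_left _ _

lemma birkhoffSum_measurable (hT : Measurable T) (hg : Measurable g) (n : ℕ) :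
    Measurable (fun x => birkhoffSum T g n x) := by
  unfold birkhoffSum
  exact Finset.measurable_sum _ fun i _ => hg.comp (hT.iterate i)

lemma runMax_measurable (hT : Measurable T) (hg : Measurable g) (N : ℕ) :
    Measurable (runMax T g N) := by
  induction N with
  | zero => simpa [runMax] using measurable_const
  | succ N ih => exact ih.max (birkhoffSum_measurable hT hg (N+1))

lemma birkhoffSum_integrable (hT : MeasurePreserving T μ μ) (hg : Integrable g μ)
    (hgm : Measurable g) (n : ℕ) : Integrable (fun x => birkhoffSum T g n x) μ := by
  unfold birkhoffSum
  refine integrable_finset_sum _ fun i _ => ?_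
  exact (hT.iterate i).integrable_comp hgm.aestronglyMeasurable |>.mpr hg

lemma runMax_integrable (hT : MeasurePreserving T μ μ) (hg : Integrable g μ)
    (hgm : Measurable g) (N : ℕ) : Integrable (runMax T g N) μ := by
  induction N with
  | zero => simpa [runMax] using integrable_const (0:ℝ)
  | succ N ih => exact ih.sup (birkhoffSum_integrable hT hg hgm (N+1))

lemma runMax_succ_eq (N : ℕ) (x : X) :
    runMax T g (N+1) x = max 0 (g x + runMax T g N (T x)) := by
  induction N generalizing x with
  | zero => simp [runMax, birkhoffSum_one]
  | succ N ih =>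
    show max (runMax T g (N+1) x) (birkhoffSum T g (N+2) x) = _
    rw [ih x, birkhoffSum_succ' T g (N+1) x]
    show max (max 0 (g x + runMax T g N (T x))) (g x + birkhoffSum T g (N+1) (T x)) = _
    rw [max_assoc, max_add_add_left]
    rfl

lemma runMax_pos_iff (N : ℕ) (x : X) :
    0 < runMax T g N x ↔ ∃ n, 1 ≤ n ∧ n ≤ N ∧ 0 < birkhoffSum T g n x := by
  induction N with
  | zero =>
    simp [runMax]
  | succ N ih =>
    show 0 < max (runMax T g N x) (birkhoffSum T g (N+1) x) ↔ _
    rw [lt_max_iff, ih]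
    constructor
    · rintro (⟨n, h1, h2, h3⟩ | h)
      · exact ⟨n, h1, by omega, h3⟩
      · exact ⟨N+1, by omega, le_rfl, h⟩
    · rintro ⟨n, h1, h2, h3⟩
      rcases Nat.lt_or_ge n (N+1) with h | h
      · exact Or.inl ⟨n, h1, by omega, h3⟩
      · have : n = N + 1 := by omega
        exact Or.inr (this ▸ h3)

/-- Maximal ergodic theorem. -/
lemma maximal_ergodic (hT : MeasurePreserving T μ μ) (hgm : Measurable g)
    (hg : Integrable g μ) :
    0 ≤ ∫ x in {x | ∃ n, 1 ≤ n ∧ 0 < birkhoffSum T g n x}, g x ∂μ := by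
  set E : ℕ → Set X := fun N => {x | 0 < runMax T g N x} with hEdef
  have hEm : ∀ N, MeasurableSet (E N) :=
    fun N => measurableSet_lt measurable_const (runMax_measurable hT.measurable hgm N)
  have hmono : Monotone E := by
    intro a b hab
    induction b, hab using Nat.le_induction with
    | base => exact fun _ h => h
    | succ b hb ih => exact ih.trans (fun x hx => lt_of_lt_of_le hx (runMax_mono b x))
  -- key pointwise inequality
  have hkey : ∀ N x, (E N).indicator g x ≥ runMax T g N x - runMax T g N (T x) := by
    intro N x
    by_cases hx : x ∈ E N
    · rw [Set.indicator_of_mem hx]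
      have hpos : 0 < runMax T g N x := hx
      cases N with
      | zero => simp [runMax] at hpos
      | succ N =>
        have h1 : runMax T g (N+1) x = g x + runMax T g N (T x) := by
          rw [runMax_succ_eq] at hpos ⊢
          rcases max_cases 0 (g x + runMax T g N (T x)) with ⟨h, _⟩ | ⟨h, _⟩
          · rw [h] at hpos; exact absurd hpos (lt_irrefl 0)
          · exact h
        rw [h1]
        have := runMax_mono (T:=T) (g:=g) N (T x)
        linarith
    · rw [Set.indicator_of_notMem hx]
      have h0 : runMax T g N x = 0 :=
        le_antisymm (not_lt.mp hx) (runMax_nonneg N x)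
      rw [h0]
      have := runMax_nonneg (T:=T) (g:=g) N (T x)
      linarith
  -- integrate
  have hint : ∀ N, 0 ≤ ∫ x in E N, g x ∂μ := by
    intro N
    have hMi := runMax_integrable hT hg hgm N
    have hMTi : Integrable (fun x => runMax T g N (T x)) μ :=
      (hT.integrable_comp (runMax_measurable hT.measurable hgm N).aestronglyMeasurable).mpr hMi
    have h1 : ∫ x, (runMax T g N x - runMax T g N (T x)) ∂μ = 0 := by
      rw [integral_sub hMi hMTi]
      have : ∫ x, runMax T g N (T x) ∂μ = ∫ x, runMax T g N x ∂μ := by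
        rw [← hT.map_eq, integral_map hT.measurable.aemeasurable
          ((runMax_measurable hT.measurable hgm N).aestronglyMeasurable)]
        rw [hT.map_eq]
      rw [this, sub_self]
    have h2 : ∫ x, (E N).indicator g x ∂μ ≥ ∫ x, (runMax T g N x - runMax T g N (T x)) ∂μ := by
      refine integral_mono (hMi.sub hMTi) (hg.indicator (hEm N)) ?_
      intro x; exact hkey N x
    rw [h1] at h2
    rwa [integral_indicator (hEm N)] at h2
  -- take limit
  have hunion : (⋃ N, E N) = {x | ∃ n, 1 ≤ n ∧ 0 < birkhoffSum T g n x} := by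
    ext x
    simp only [Set.mem_iUnion, hEdef, Set.mem_setOf_eq]
    constructor
    · rintro ⟨N, hN⟩
      obtain ⟨n, h1, _, h3⟩ := (runMax_pos_iff N x).mp hN
      exact ⟨n, h1, h3⟩
    · rintro ⟨n, h1, h3⟩
      exact ⟨n, (runMax_pos_iff n x).mpr ⟨n, h1, le_rfl, h3⟩⟩
  have hlim := MeasureTheory.tendsto_setIntegral_of_monotone hEm hmono hg.integrableOn
  rw [hunion] at hlim
  exact ge_of_tendsto' hlim hint

lemma birkhoffSum_sub_const (T : X → X) (g : X → ℝ) (α : ℝ) (n : ℕ) (x : X) :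
    birkhoffSum T (fun y => g y - α) n x = birkhoffSum T g n x - n * α := by
  simp [birkhoffSum, Finset.sum_sub_distrib, mul_comm]

/-- Maximal ergodic theorem, `α` version. -/
lemma maximal_ergodic_alpha (hT : MeasurePreserving T μ μ) (hgm : Measurable g)
    (hg : Integrable g μ) (α : ℝ) :
    α * (μ {x | ∃ n, 1 ≤ n ∧ α * n < birkhoffSum T g n x}).toReal ≤
      ∫ x in {x | ∃ n, 1 ≤ n ∧ α * n < birkhoffSum T g n x}, g x ∂μ := by
  have hgm' : Measurable (fun y => g y - α) := hgm.sub measurable_const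
  have hg' : Integrable (fun y => g y - α) μ := hg.sub (integrable_const α)
  have h := maximal_ergodic hT hgm' hg'
  have hset : {x | ∃ n, 1 ≤ n ∧ 0 < birkhoffSum T (fun y => g y - α) n x}
      = {x | ∃ n, 1 ≤ n ∧ α * n < birkhoffSum T g n x} := by
    ext x
    simp only [Set.mem_setOf_eq, birkhoffSum_sub_const, sub_pos, mul_comm]
  rw [hset] at h
  set E := {x | ∃ n, 1 ≤ n ∧ α * n < birkhoffSum T g n x} with hE
  have hEm : MeasurableSet E := by
    have : E = ⋃ n, ⋃ (_ : 1 ≤ n), {x | α * n < birkhoffSum T g n x} := by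
      ext x; simp [hE]
    rw [this]
    exact MeasurableSet.iUnion fun n => MeasurableSet.iUnion fun _ =>
      measurableSet_lt measurable_const (birkhoffSum_measurable hT.measurable hgm n)
  have : ∫ x in E, (g x - α) ∂μ = ∫ x in E, g x ∂μ - α * (μ E).toReal := by
    rw [integral_sub hg.integrableOn (integrableOn_const (measure_ne_top μ E))]
    rw [setIntegral_const, measureReal_def]
    ring_nf
  rw [this] at h
  linarith

/-- one-sided Birkhoff bound for ergodic maps -/
lemma birkhoff_upper (hT : Ergodic T μ) (hgm : Measurable g) (hg : Integrable g μ) :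
    ∀ᵐ x ∂μ, ∀ r : ℚ, ∫ y, g y ∂μ < (r : ℝ) * (μ Set.univ).toReal →
      ∀ᶠ n in atTop, birkhoffSum T g n x ≤ (r : ℝ) * n := by
  -- the frequent-overshoot sets
  set G : ℚ → Set X := fun r => {x | ∃ᶠ n in atTop, (r : ℝ) * n < birkhoffSum T g n x} with hG
  have hGm : ∀ r, MeasurableSet (G r) := by
    intro r
    have : G r = ⋂ N, ⋃ n, ⋃ (_ : N ≤ n), {x | (r:ℝ) * n < birkhoffSum T g n x} := by
      ext x
      simp only [hG, Set.mem_setOf_eq, frequently_atTop, Set.mem_iInter, Set.mem_iUnion]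
      constructor
      · intro h N; obtain ⟨b, hb, hb'⟩ := h N; exact ⟨b, hb, hb'⟩
      · intro h N; obtain ⟨b, hb, hb'⟩ := h N; exact ⟨b, hb, hb'⟩
    rw [this]
    exact MeasurableSet.iInter fun N => MeasurableSet.iUnion fun n => MeasurableSet.iUnion
      fun _ => measurableSet_lt measurable_const
        (birkhoffSum_measurable hT.toMeasurePreserving.measurable hgm n)
  set H : ℚ → Set X := fun q => ⋃ (r : ℚ) (_ : q < r), G r with hH
  have hHm : ∀ q, MeasurableSet (H q) :=
    fun q => MeasurableSet.iUnion fun r => MeasurableSet.iUnion fun _ => hGm r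
  -- invariance
  have hinv : ∀ q : ℚ, T ⁻¹' (H q) = H q := by
    intro q
    ext x
    simp only [hH, Set.mem_preimage, Set.mem_iUnion, hG, Set.mem_setOf_eq]
    constructor
    · rintro ⟨r, hqr, hfreq⟩
      obtain ⟨r', hqr', hr'r⟩ := exists_rat_btwn (show (q:ℝ) < r by exact_mod_cast hqr)
      refine ⟨r', by exact_mod_cast hqr', ?_⟩
      rw [frequently_atTop] at hfreq ⊢
      intro N
      obtain ⟨n₀, hn₀⟩ := exists_nat_ge ((|g x| + |(r':ℝ)|) / ((r:ℝ) - r'))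
      obtain ⟨n, hnN, hn⟩ := hfreq (max N n₀)
      refine ⟨n + 1, by omega, ?_⟩
      have hS : birkhoffSum T g (n+1) x = g x + birkhoffSum T g n (T x) :=
        birkhoffSum_succ' T g n x
      have hrr' : (0:ℝ) < (r:ℝ) - r' := by
        have : (r':ℝ) < r := hr'r
        linarith
      have hn₀n : ((|g x| + |(r':ℝ)|) / ((r:ℝ) - r')) ≤ n := by
        calc _ ≤ (n₀ : ℝ) := hn₀
        _ ≤ n := by exact_mod_cast le_of_max_le_right hnN
      have key : (r':ℝ) * (n+1) ≤ (r:ℝ) * n + g x := by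
        rw [div_le_iff₀ hrr'] at hn₀n
        have h1 : -(g x) ≤ |g x| := neg_le_abs _
        have h2 : (r':ℝ) ≤ |(r':ℝ)| := le_abs_self _
        nlinarith
      push_cast
      calc (r':ℝ) * (n+1) ≤ (r:ℝ) * n + g x := key
      _ < birkhoffSum T g n (T x) + g x := by linarith
      _ = birkhoffSum T g (n+1) x := by rw [hS]; ring
    · rintro ⟨r, hqr, hfreq⟩
      obtain ⟨r', hqr', hr'r⟩ := exists_rat_btwn (show (q:ℝ) < r by exact_mod_cast hqr)
      refine ⟨r', by exact_mod_cast hqr', ?_⟩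
      rw [frequently_atTop] at hfreq ⊢
      intro N
      obtain ⟨n₀, hn₀⟩ := exists_nat_ge ((|g x| + |(r:ℝ)|) / ((r:ℝ) - r'))
      obtain ⟨n, hnN, hn⟩ := hfreq (max (N+1) (n₀+1))
      have hn1 : 1 ≤ n := le_trans (by omega) hnN
      refine ⟨n - 1, by omega, ?_⟩
      have hS : birkhoffSum T g n x = g x + birkhoffSum T g (n-1) (T x) := by
        have := birkhoffSum_succ' T g (n-1) x
        rwa [Nat.sub_add_cancel hn1] at this
      have hrr' : (0:ℝ) < (r:ℝ) - r' := by
        have : (r':ℝ) < r := hr'r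
        linarith
      have hn₀n : ((|g x| + |(r:ℝ)|) / ((r:ℝ) - r')) ≤ ((n-1 : ℕ) : ℝ) := by
        calc _ ≤ (n₀ : ℝ) := hn₀
        _ ≤ ((n-1:ℕ) : ℝ) := by
          have : n₀ + 1 ≤ n := le_trans (le_max_right _ _) hnN
          exact_mod_cast by omega
      have hcast : ((n:ℝ)) = ((n-1:ℕ):ℝ) + 1 := by
        have : n - 1 + 1 = n := Nat.sub_add_cancel hn1
        exact_mod_cast (by exact_mod_cast congrArg (Nat.cast : ℕ → ℝ) this.symm)
      have key : (r':ℝ) * ((n-1:ℕ):ℝ) + g x ≤ (r:ℝ) * n := by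
        rw [div_le_iff₀ hrr'] at hn₀n
        have h1 : g x ≤ |g x| := le_abs_self _
        have h2 : -(r:ℝ) ≤ |(r:ℝ)| := neg_le_abs _
        rw [hcast]
        nlinarith
      have : (r':ℝ) * ((n-1:ℕ):ℝ) < birkhoffSum T g (n-1) (T x) := by
        have := hn
        rw [hS] at this
        linarith
      exact this
  -- null or conull, and null wins when the integral is small
  have hnull : ∀ q : ℚ, ∫ y, g y ∂μ < (q : ℝ) * (μ Set.univ).toReal → μ (H q) = 0 := by
    intro q hq
    rcases hT.ae_empty_or_univ (hHm q) (hinv q) with h | h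
    · exact ae_eq_empty.mp h
    · exfalso
      -- H q is conull; H q ⊆ E q
      set E := {x | ∃ n, 1 ≤ n ∧ (q:ℝ) * n < birkhoffSum T g n x} with hE
      have hsub : H q ⊆ E := by
        rintro x hx
        simp only [hH, Set.mem_iUnion, hG, Set.mem_setOf_eq] at hx
        obtain ⟨r, hqr, hfreq⟩ := hx
        rw [frequently_atTop] at hfreq
        obtain ⟨n, hn1, hn⟩ := hfreq 1
        refine ⟨n, hn1, lt_of_le_of_lt ?_ hn⟩
        have : (q:ℝ) ≤ r := le_of_lt (by exact_mod_cast hqr)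
        have : (0:ℝ) ≤ n := Nat.cast_nonneg n
        nlinarith [show (q:ℝ) ≤ r from le_of_lt (by exact_mod_cast hqr)]
      have hEuniv : E =ᵐ[μ] (Set.univ : Set X) := by
        refine ae_eq_univ.mpr (measure_mono_null ?_ (ae_eq_univ.mp h))
        intro x hx
        simp only [Set.mem_compl_iff] at hx ⊢
        exact fun hxH => hx (hsub hxH)
      have h1 := maximal_ergodic_alpha hT.toMeasurePreserving hgm hg (q:ℝ)
      rw [← hE] at h1
      have h2 : μ E = μ Set.univ := measure_congr hEuniv
      have h3 : ∫ x in E, g x ∂μ = ∫ y, g y ∂μ := by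
        rw [setIntegral_congr_set hEuniv, setIntegral_univ]
      rw [h2, h3] at h1
      linarith
  -- combine over countably many rationals
  have := ae_all_iff.mpr fun q : ℚ =>
    (ae_iff.mpr (by
      by_cases hq : ∫ y, g y ∂μ < (q : ℝ) * (μ Set.univ).toReal
      · simpa [hq] using hnull q hq
      · simp [hq] : μ {x | ¬ (∫ y, g y ∂μ < (q : ℝ) * (μ Set.univ).toReal → x ∉ H q)} = 0))
  filter_upwards [this] with x hx r hr
  -- if not eventually, then frequently; get contradiction via some rational between
  by_contra hcon
  rw [not_eventually] at hcon
  -- x frequently exceeds r * n, so x ∈ G r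
  have hxG : x ∈ G r := by
    simp only [hG, Set.mem_setOf_eq]
    exact hcon.mono fun n hn => lt_of_not_ge hn
  -- find rational q < r with ∫ g < q μX
  have hμX : (0:ℝ) ≤ (μ Set.univ).toReal := ENNReal.toReal_nonneg
  obtain ⟨q, hq1, hq2⟩ : ∃ q : ℚ, ∫ y, g y ∂μ < (q:ℝ) * (μ Set.univ).toReal ∧ q < r := by
    rcases eq_or_lt_of_le hμX with h0 | h0
    · exact ⟨r - 1, by rw [← h0] at hr ⊢; simpa using hr, by linarith⟩
    · obtain ⟨q, hq1, hq2⟩ := exists_rat_btwn (show (∫ y, g y ∂μ) / (μ Set.univ).toReal < (r:ℝ) by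
        rw [div_lt_iff₀ h0]; exact hr)
      refine ⟨q, ?_, by exact_mod_cast hq2⟩
      rw [div_lt_iff₀ h0] at hq1
      exact hq1
  exact (hx q hq1) (Set.mem_iUnion.mpr ⟨r, Set.mem_iUnion.mpr ⟨hq2, hxG⟩⟩)

lemma birkhoffSum_neg' (T : X → X) (g : X → ℝ) (n : ℕ) (x : X) :
    birkhoffSum T (fun y => -(g y)) n x = - birkhoffSum T g n x := by
  simp [birkhoffSum]

/-- Birkhoff pointwise ergodic theorem (ergodic case). -/
lemma birkhoff_ergodic (hT : Ergodic T μ) (hgm : Measurable g) (hg : Integrable g μ)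
    (hμ : μ ≠ 0) :
    ∀ᵐ x ∂μ, Tendsto (fun n => birkhoffSum T g n x / n) atTop
      (𝓝 ((∫ y, g y ∂μ) / (μ Set.univ).toReal)) := by
  have hμ0 : 0 < (μ Set.univ).toReal :=
    ENNReal.toReal_pos (by simpa [Measure.measure_univ_eq_zero] using hμ) (measure_ne_top μ _)
  set c : ℝ := (∫ y, g y ∂μ) / (μ Set.univ).toReal with hc
  have hneg : Integrable (fun y => -(g y)) μ := hg.neg
  filter_upwards [birkhoff_upper hT hgm hg, birkhoff_upper hT hgm.neg hneg] with x hx1 hx2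
  rw [Metric.tendsto_atTop]
  intro ε hε
  obtain ⟨r, hr1, hr2⟩ := exists_rat_btwn (show c < c + ε/2 by linarith)
  obtain ⟨r', hr1', hr2'⟩ := exists_rat_btwn (show -c < -c + ε/2 by linarith)
  have h1 : ∫ y, g y ∂μ < (r:ℝ) * (μ Set.univ).toReal := by
    have : c < r := hr1
    calc ∫ y, g y ∂μ = c * (μ Set.univ).toReal := by rw [hc]; field_simp
    _ < (r:ℝ) * (μ Set.univ).toReal := by exact mul_lt_mul_of_pos_right this hμ0
  have h2 : ∫ y, -(g y) ∂μ < (r':ℝ) * (μ Set.univ).toReal := by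
    rw [integral_neg]
    have hgc : ∫ y, g y ∂μ = c * (μ Set.univ).toReal := by rw [hc]; field_simp
    have : -c < r' := hr1'
    calc -∫ y, g y ∂μ = (-c) * (μ Set.univ).toReal := by rw [hgc]; ring
    _ < (r':ℝ) * (μ Set.univ).toReal := mul_lt_mul_of_pos_right this hμ0
  obtain ⟨N1, hN1⟩ := (eventually_atTop).mp (hx1 r h1)
  obtain ⟨N2, hN2⟩ := (eventually_atTop).mp (hx2 r' h2)
  refine ⟨max (max N1 N2) 1, fun n hn => ?_⟩
  have hn1 : 1 ≤ n := le_trans (le_max_right _ _) hn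
  have hnpos : (0:ℝ) < n := by exact_mod_cast hn1
  have hu : birkhoffSum T g n x ≤ (r:ℝ) * n :=
    hN1 n (le_trans (le_trans (le_max_left _ _) (le_max_left _ _)) hn)
  have hl : -(birkhoffSum T g n x) ≤ (r':ℝ) * n := by
    have := hN2 n (le_trans (le_trans (le_max_right _ _) (le_max_left _ _)) hn)
    rwa [show (-g) = fun y => -(g y) from rfl, birkhoffSum_neg'] at this
  rw [Real.dist_eq, abs_sub_lt_iff]
  constructor
  · have : birkhoffSum T g n x / n ≤ (r:ℝ) := by
      rw [div_le_iff₀ hnpos]; linarith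
    have hrc : (r:ℝ) < c + ε/2 := hr2
    linarith
  · have h3 : -(birkhoffSum T g n x) / n ≤ (r':ℝ) := by
      rw [div_le_iff₀ hnpos]; linarith
    have h4 : -(birkhoffSum T g n x / n) ≤ (r':ℝ) := by rw [← neg_div]; exact h3
    have : (r':ℝ) < -c + ε/2 := hr2'
    linarith

lemma birkhoffSum_intCast (T : X → X) (f : X → ℤ) (n : ℕ) (x : X) :
    ((birkhoffSum T f n x : ℤ) : ℝ) = birkhoffSum T (fun y => ((f y : ℝ))) n x := by
  simp [birkhoffSum]

/-- Atkinson/Schmidt recurrence lemma. -/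
lemma atkinson (hT : Ergodic T μ) (f : X → ℤ) (hf_meas : Measurable f)
    (hf_int : Integrable (fun x => (f x : ℝ)) μ) (hint : ∫ x, (f x : ℝ) ∂μ = 0)
    {A : Set X} (hA : MeasurableSet A) (hA0 : μ A ≠ 0) :
    ∃ x ∈ A, ∃ n, 1 ≤ n ∧ T^[n] x ∈ A ∧ birkhoffSum T f n x = 0 := by
  classical
  by_contra hcon
  push_neg at hcon
  have hμ : μ ≠ 0 := by
    intro h; exact hA0 (by simp [h])
  set g1 : X → ℝ := fun x => (f x : ℝ) with hg1
  set g2 : X → ℝ := A.indicator (fun _ => (1:ℝ)) with hg2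
  have hg1m : Measurable g1 := measurable_from_top.comp hf_meas
  have hg2m : Measurable g2 := measurable_const.indicator hA
  have hg2i : Integrable g2 μ := (integrable_const (1:ℝ)).indicator hA
  have hg2int : ∫ y, g2 y ∂μ = (μ A).toReal := by
    rw [hg2, integral_indicator_const _ hA]; simp; rfl
  set a : ℝ := (μ A).toReal / (μ Set.univ).toReal with ha
  have hApos : 0 < (μ A).toReal := ENNReal.toReal_pos hA0 (measure_ne_top μ A)
  have hXpos : 0 < (μ Set.univ).toReal :=
    ENNReal.toReal_pos (by simpa [Measure.measure_univ_eq_zero] using hμ) (measure_ne_top μ _)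
  have hapos : 0 < a := div_pos hApos hXpos
  have hb1 := birkhoff_ergodic hT hg1m hf_int hμ
  rw [hint] at hb1
  have hb1' : ∀ᵐ x ∂μ, Tendsto (fun n => birkhoffSum T g1 n x / n) atTop (𝓝 0) := by
    simpa using hb1
  have hb2 : ∀ᵐ x ∂μ, Tendsto (fun n => birkhoffSum T g2 n x / n) atTop (𝓝 a) := by
    have := birkhoff_ergodic hT hg2m hg2i hμ
    rw [hg2int] at this
    exact this
  -- pick a point in A satisfying both Birkhoff limits
  obtain ⟨x, hxA, hx1, hx2⟩ :
      ∃ x, x ∈ A ∧ Tendsto (fun n => birkhoffSum T g1 n x / n) atTop (𝓝 0) ∧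
        Tendsto (fun n => birkhoffSum T g2 n x / n) atTop (𝓝 a) := by
    by_contra hne
    push_neg at hne
    refine hA0 (measure_mono_null (fun x hxA => ?_) (ae_iff.mp (hb1'.and hb2)))
    simp only [Set.mem_setOf_eq]
    intro hP
    exact (hne x hxA hP.1) hP.2
  -- visit counts
  set V : ℕ → ℕ := fun N => ((Finset.range N).filter (fun n => T^[n] x ∈ A)).card with hV
  have hVcount : ∀ N, birkhoffSum T g2 N x = (V N : ℝ) := by
    intro N
    rw [hg2, birkhoffSum]
    simp only [Set.indicator_apply]
    rw [Finset.sum_boole]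
  -- injectivity of sums at visit times
  have hstep : ∀ m n : ℕ, m < n → T^[m] x ∈ A → T^[n] x ∈ A →
      birkhoffSum T f m x = birkhoffSum T f n x → False := by
    intro m n hlt hmA hnA hEq
    have hkey : birkhoffSum T f n x = birkhoffSum T f m x + birkhoffSum T f (n - m) (T^[m] x) := by
      have h := birkhoffSum_add T f m (n-m) x
      rwa [Nat.add_sub_cancel' hlt.le] at h
    have hz : birkhoffSum T f (n-m) (T^[m] x) = 0 := by omega
    have hTn : T^[n-m] (T^[m] x) ∈ A := by
      have h := Function.iterate_add_apply T (n-m) m x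
      rw [show n - m + m = n by omega] at h
      rw [← h]
      exact hnA
    exact hcon (T^[m] x) hmA (n-m) (by omega) hTn hz
  have hinj : ∀ N : ℕ, Set.InjOn (fun n => birkhoffSum T f n x)
      (((Finset.range N).filter (fun n => T^[n] x ∈ A)) : Finset ℕ) := by
    intro N m hm n hn hEq
    simp only [Finset.coe_filter, Set.mem_setOf_eq, Finset.mem_range] at hm hn
    have hEq' : birkhoffSum T f m x = birkhoffSum T f n x := hEq
    rcases Nat.lt_trichotomy m n with hlt | heq | hlt
    · exact absurd (hstep m n hlt hm.2 hn.2 hEq') (fun h => h)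
    · exact heq
    · exact absurd (hstep n m hlt hn.2 hm.2 hEq'.symm) (fun h => h)
  -- cardinality bound
  have hbound : ∀ (N : ℕ) (K : ℤ), 0 ≤ K → (∀ n < N, |birkhoffSum T f n x| ≤ K) →
      (V N : ℝ) ≤ 2 * (K:ℝ) + 1 := by
    intro N K hK0 hKb
    have hmap : ∀ n ∈ (Finset.range N).filter (fun n => T^[n] x ∈ A),
        birkhoffSum T f n x ∈ Finset.Icc (-K) K := by
      intro n hn
      rw [Finset.mem_filter, Finset.mem_range] at hn
      rw [Finset.mem_Icc, ← abs_le]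
      exact hKb n hn.1
    have hcard := Finset.card_le_card_of_injOn (fun n => birkhoffSum T f n x) hmap (hinj N)
    rw [Int.card_Icc] at hcard
    have htn : ((K + 1 - -K).toNat : ℤ) = 2*K + 1 := by
      rw [Int.toNat_of_nonneg (by linarith)]; ring
    have : (V N : ℤ) ≤ 2*K+1 := by
      rw [← htn]; exact_mod_cast hcard
    exact_mod_cast this
  -- quantitative endgame
  rw [Metric.tendsto_atTop] at hx1 hx2
  set δ : ℝ := a/8 with hδ
  have hδpos : 0 < δ := by positivity
  obtain ⟨N1, hN1⟩ := hx1 δ hδpos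
  obtain ⟨N2, hN2⟩ := hx2 (a/2) (by positivity)
  set C : ℝ := ∑ n ∈ Finset.range N1, |birkhoffSum T g1 n x| with hC
  have hC0 : 0 ≤ C := Finset.sum_nonneg fun _ _ => abs_nonneg _
  have hCb : ∀ n < N1, |birkhoffSum T g1 n x| ≤ C := fun n hn =>
    Finset.single_le_sum (f := fun n => |birkhoffSum T g1 n x|)
      (fun i _ => abs_nonneg _) (Finset.mem_range.mpr hn)
  obtain ⟨N, hNgt⟩ := exists_nat_gt (max (max (N2:ℝ) (C/δ)) (12/a))
  have hNN2 : N2 ≤ N := by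
    have : (N2:ℝ) ≤ max (max (N2:ℝ) (C/δ)) (12/a) := le_max_of_le_left (le_max_left _ _)
    exact_mod_cast this.trans hNgt.le
  have hNCδ : C/δ < N := lt_of_le_of_lt (le_max_of_le_left (le_max_right _ _)) hNgt
  have hN12 : 12/a < N := lt_of_le_of_lt (le_max_right _ _) hNgt
  have hNpos : (0:ℝ) < N := lt_trans (by positivity) hN12
  -- bound on sums below N
  have hSb : ∀ n < N, |birkhoffSum T g1 n x| ≤ max C (δ*N) := by
    intro n hn
    rcases Nat.lt_or_ge n N1 with h | h
    · exact le_max_of_le_left (hCb n h)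
    · rcases Nat.eq_zero_or_pos n with rfl | hn1
      · simp only [birkhoffSum_zero, abs_zero]
        exact le_max_of_le_right (by positivity)
      · have hd := hN1 n h
        rw [Real.dist_eq, sub_zero] at hd
        have hnr : (0:ℝ) < n := by exact_mod_cast hn1
        have habs : |birkhoffSum T g1 n x / n| = |birkhoffSum T g1 n x| / n := by
          rw [abs_div, abs_of_pos hnr]
        rw [habs, div_lt_iff₀ hnr] at hd
        have hnN : (n:ℝ) ≤ N := by exact_mod_cast hn.le
        refine le_max_of_le_right ?_
        nlinarith [hδpos.le]
  set B : ℝ := max C (δ*(N:ℝ)) with hB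
  have hB0 : 0 ≤ B := le_max_of_le_left hC0
  set K : ℤ := ⌈B⌉ with hKdef
  have hK0 : 0 ≤ K := Int.ceil_nonneg hB0
  have hKb : ∀ n < N, |birkhoffSum T f n x| ≤ K := by
    intro n hn
    have h1 : |((birkhoffSum T f n x : ℤ) : ℝ)| ≤ B := by
      rw [birkhoffSum_intCast]
      exact hSb n hn
    have h2 : |((birkhoffSum T f n x : ℤ) : ℝ)| ≤ (K:ℝ) := h1.trans (Int.le_ceil B)
    exact_mod_cast h2
  have hVle := hbound N K hK0 hKb
  have hKB : (K:ℝ) < B + 1 := Int.ceil_lt_add_one B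
  have hBeq : B = δ * N := by
    rw [hB]
    exact max_eq_right (by rw [div_lt_iff₀ hδpos] at hNCδ; linarith)
  have hVge : a/2 * N < (V N:ℝ) := by
    have hd := hN2 N hNN2
    rw [hVcount, Real.dist_eq] at hd
    have := abs_sub_lt_iff.mp hd
    have h3 : a - a/2 < (V N:ℝ)/N := by linarith [this.2]
    have : a/2 < (V N:ℝ)/N := by linarith
    calc a/2 * N < ((V N:ℝ)/N) * N := by exact mul_lt_mul_of_pos_right this hNpos
    _ = (V N:ℝ) := by field_simp
  -- contradiction
  have hfinal : a/2 * N < 2*(δ*N+1) + 1 := by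
    calc a/2 * N < (V N:ℝ) := hVge
    _ ≤ 2*(K:ℝ)+1 := hVle
    _ < 2*(B+1)+1 := by linarith
    _ = 2*(δ*N+1)+1 := by rw [hBeq]
  rw [hδ] at hfinal
  -- a/2 N < a/4 N + 3  ⇒ a/4 N < 3 ⇒ N < 12 / a, contradiction with hN12
  have : a/4 * N < 3 := by nlinarith
  rw [div_lt_iff₀ hapos] at hN12
  nlinarith


end SchmidtAux

open SchmidtAux

/-- K. Schmidt's recurrence criterion for ℤ-valued skew products:
if `(X, μ)` is a finite measure space, `T : X → X` is ergodic and measure preserving,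
and `f : X → ℤ` is integrable, then the skew product `S (x, k) = (T x, k + f x)`
preserves the measure `μ ⊗ count` on `X × ℤ`, and `S` is conservative (recurrent)
if and only if `∫ f dμ = 0`. -/
theorem schmidt_skew_product_recurrence
    {X : Type*} [MeasurableSpace X] (μ : Measure X) [IsFiniteMeasure μ]
    (T : X → X) (hT : Ergodic T μ)
    (f : X → ℤ) (hf_meas : Measurable f)
    (hf_int : Integrable (fun x => (f x : ℝ)) μ) :
    MeasurePreserving (fun p : X × ℤ => (T p.1, p.2 + f p.1))
      (μ.prod Measure.count) (μ.prod Measure.count) ∧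
    (Conservative (fun p : X × ℤ => (T p.1, p.2 + f p.1)) (μ.prod Measure.count) ↔
      ∫ x, (f x : ℝ) ∂μ = 0) := by
  have hMP : MeasurePreserving (fun p : X × ℤ => (T p.1, p.2 + f p.1))
      (μ.prod Measure.count) (μ.prod Measure.count) :=
    skew_mp μ T hT.toMeasurePreserving f hf_meas
  refine ⟨hMP, ?_, ?_⟩
  · -- conservative → zero integral
    intro hcons
    by_cases hμ : μ = 0
    · rw [hμ]; exact integral_zero_measure _
    by_contra hne
    have hg1m : Measurable (fun x => (f x : ℝ)) := measurable_from_top.comp hf_meas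
    have hb := birkhoff_ergodic hT hg1m hf_int hμ
    have hXpos : 0 < (μ Set.univ).toReal :=
      ENNReal.toReal_pos (by simpa [Measure.measure_univ_eq_zero] using hμ) (measure_ne_top μ _)
    set c : ℝ := (∫ y, (f y : ℝ) ∂μ) / (μ Set.univ).toReal with hc
    have hcne : c ≠ 0 := div_ne_zero hne (ne_of_gt hXpos)
    -- a.e. no frequent zeroes of the cocycle
    set G : Set X := {x | ¬ ∃ᶠ n in atTop, birkhoffSum T f n x = 0} with hGdef
    have hGm : MeasurableSet G := by
      have hSm : ∀ n : ℕ, Measurable (fun x => birkhoffSum T f n x) := by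
        intro n
        unfold birkhoffSum
        exact Finset.measurable_sum _ fun i _ =>
          hf_meas.comp (hT.toMeasurePreserving.measurable.iterate i)
      have : Gᶜ = ⋂ N, ⋃ n, ⋃ (_ : N ≤ n), {x | birkhoffSum T f n x = 0} := by
        ext x
        simp only [hGdef, Set.mem_compl_iff, Set.mem_setOf_eq, not_not, frequently_atTop,
          Set.mem_iInter, Set.mem_iUnion]
        constructor
        · intro h N; obtain ⟨b, hb1, hb2⟩ := h N; exact ⟨b, hb1, hb2⟩
        · intro h N; obtain ⟨b, hb1, hb2⟩ := h N; exact ⟨b, hb1, hb2⟩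
      have hGc : MeasurableSet (Gᶜ) := by
        rw [this]
        exact MeasurableSet.iInter fun N => MeasurableSet.iUnion fun n =>
          MeasurableSet.iUnion fun _ => (hSm n) (measurableSet_singleton 0)
      simpa using hGc.compl
    have hGae : ∀ᵐ x ∂μ, x ∈ G := by
      filter_upwards [hb] with x hx
      intro hfreq
      rw [Metric.tendsto_atTop] at hx
      obtain ⟨N, hN⟩ := hx (|c|/2) (by positivity)
      rw [frequently_atTop] at hfreq
      obtain ⟨n, hn, hzero⟩ := hfreq (N + 1)
      have := hN n (by omega)
      rw [Real.dist_eq] at this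
      have hz : ((birkhoffSum T f n x : ℤ) : ℝ) = 0 := by exact_mod_cast hzero
      rw [birkhoffSum_intCast] at hz
      rw [hz] at this
      simp only [zero_div] at this
      rw [abs_sub_comm, sub_zero] at this
      have : |c| < |c|/2 := this
      linarith [abs_nonneg c]
    have hGc0 : μ Gᶜ = 0 := by
      exact ae_iff.mp hGae
    -- the base set
    set E : Set (X × ℤ) := (Set.univ : Set X) ×ˢ ({0} : Set ℤ) with hEdef
    have hEm : MeasurableSet E := MeasurableSet.univ.prod (measurableSet_singleton 0)
    have hE0 : (μ.prod Measure.count) E ≠ 0 := by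
      rw [hEdef, Measure.prod_prod, Measure.count_singleton, mul_one]
      simpa [Measure.measure_univ_eq_zero] using hμ
    have hret := hcons.ae_mem_imp_frequently_image_mem hEm.nullMeasurableSet
    have hbad : (μ.prod Measure.count) (G ×ˢ ({0} : Set ℤ)) = 0 := by
      refine measure_mono_null (fun p hp => ?_) (ae_iff.mp hret)
      obtain ⟨hp1, hp2⟩ := hp
      simp only [Set.mem_setOf_eq]
      intro himp
      have hpE : p ∈ E := ⟨Set.mem_univ _, hp2⟩
      have hfreq := himp hpE
      refine hp1 (hfreq.mono fun n hn => ?_)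
      rw [skew_iterate] at hn
      have h2 := hn.2
      simp only [Set.mem_singleton_iff] at h2 hp2
      rw [hp2, zero_add] at h2
      exact h2
    have hcompl : (μ.prod Measure.count) (Gᶜ ×ˢ ({0} : Set ℤ)) = 0 := by
      rw [Measure.prod_prod, hGc0, zero_mul]
    have hcover : E ⊆ (G ×ˢ ({0} : Set ℤ)) ∪ (Gᶜ ×ˢ ({0} : Set ℤ)) := by
      rintro ⟨x, k⟩ ⟨-, hk⟩
      by_cases hx : x ∈ G
      · exact Or.inl ⟨hx, hk⟩
      · exact Or.inr ⟨hx, hk⟩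
    have hle : (μ.prod Measure.count) E ≤
        (μ.prod Measure.count) (G ×ˢ ({0} : Set ℤ)) +
        (μ.prod Measure.count) (Gᶜ ×ˢ ({0} : Set ℤ)) :=
      (measure_mono hcover).trans (measure_union_le _ _)
    rw [hbad, hcompl] at hle
    simp only [add_zero, nonpos_iff_eq_zero] at hle
    exact hE0 hle
  · -- zero integral → conservative
    intro hint
    refine ⟨hMP.quasiMeasurePreserving, ?_⟩
    intro E hEm hE0
    obtain ⟨k, hk⟩ := slice_pos μ hEm hE0
    have hAm : MeasurableSet {x | (x, k) ∈ E} :=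
      (measurable_id.prodMk measurable_const) hEm
    obtain ⟨x, hxA, n, hn1, hTn, hsum⟩ := atkinson hT f hf_meas hf_int hint hAm hk
    refine ⟨(x, k), hxA, n, by omega, ?_⟩
    rw [skew_iterate]
    show (T^[n] x, k + birkhoffSum T f n x) ∈ E
    rw [hsum, add_zero]
    exact hTn
end

section
/- Let V and V′ be vector spaces over ℚ, B : V × V′ → ℚ a bilinear map, γ₁, …, γₙ ∈ V′, and t₁, …, tₙ positive rational numbers. Assume that for every nonzero γ in the span of {γ₁, …, γₙ} there exists x ∈ V with B(x, γ) ≠ 0. Define the linear map η : V → V′ by η(x) = Σⱼ tⱼ · B(x, γⱼ) · γⱼ. Then the range of η equals the span of {γ₁, …, γₙ}. -/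
/-- Abstract form of Lemma 5.2(2): over ℚ, if the bilinear pairing `B` does not
degenerate on the span of the `γ j`, and `t j > 0`, then the range of
`η x = ∑ j, t j • B x (γ j) • γ j` is exactly the span of the `γ j`. -/
theorem multitwist_image_eq_span
    {V V' : Type*} [AddCommGroup V] [AddCommGroup V'] [Module ℚ V] [Module ℚ V']
    (B : V →ₗ[ℚ] V' →ₗ[ℚ] ℚ) (n : ℕ)
    (γ : Fin n → V') (t : Fin n → ℚ) (ht : ∀ j, 0 < t j)
    (hnd : ∀ γ' ∈ Submodule.span ℚ (Set.range γ), γ' ≠ 0 → ∃ x : V, B x γ' ≠ 0)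
    (η : V →ₗ[ℚ] V') (hη : ∀ x, η x = ∑ j, (t j * B x (γ j)) • γ j) :
    LinearMap.range η = Submodule.span ℚ (Set.range γ) := by
  apply le_antisymm
  · rintro _ ⟨x, rfl⟩
    rw [hη]
    exact Submodule.sum_mem _ fun j _ =>
      Submodule.smul_mem _ _ (Submodule.subset_span ⟨j, rfl⟩)
  · intro w hw
    by_contra hwr
    obtain ⟨φ, hφw, hφ⟩ := Submodule.exists_dual_map_eq_bot_of_notMem hwr inferInstance
    have hker : ∀ x, φ (η x) = 0 := by
      intro x
      have : φ (η x) ∈ (LinearMap.range η).map φ := ⟨η x, ⟨x, rfl⟩, rfl⟩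
      simpa [hφ] using this
    set γ' : V' := ∑ j, (t j * φ (γ j)) • γ j with hγ'
    have hγ'mem : γ' ∈ Submodule.span ℚ (Set.range γ) :=
      Submodule.sum_mem _ fun j _ =>
        Submodule.smul_mem _ _ (Submodule.subset_span ⟨j, rfl⟩)
    have hBzero : ∀ x, B x γ' = 0 := by
      intro x
      have := hker x
      rw [hη x, map_sum] at this
      rw [hγ', map_sum]
      simp only [map_smul, smul_eq_mul] at this ⊢
      calc ∑ j, t j * φ (γ j) * B x (γ j)
          = ∑ j, t j * B x (γ j) * φ (γ j) := by
            exact Finset.sum_congr rfl fun j _ => by ring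
        _ = 0 := this
    have hγ'0 : γ' = 0 := by
      by_contra h0
      obtain ⟨x, hx⟩ := hnd γ' hγ'mem h0
      exact hx (hBzero x)
    have hsum : ∑ j, t j * φ (γ j) ^ 2 = 0 := by
      have := congrArg φ hγ'0
      rw [hγ', map_sum, map_zero] at this
      simpa [mul_assoc, sq, mul_comm, mul_left_comm] using this
    have hφγ : ∀ j, φ (γ j) = 0 := by
      have hnonneg : ∀ j ∈ Finset.univ, 0 ≤ t j * φ (γ j) ^ 2 :=
        fun j _ => mul_nonneg (ht j).le (sq_nonneg _)
      intro j
      have := (Finset.sum_eq_zero_iff_of_nonneg hnonneg).mp hsum j (Finset.mem_univ j)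
      have h2 : φ (γ j) ^ 2 = 0 := by
        rcases mul_eq_zero.mp this with h | h
        · exact absurd h (ht j).ne'
        · exact h
      exact pow_eq_zero_iff (n := 2) (by norm_num) |>.mp h2
    have : φ w = 0 := by
      have hle : Submodule.span ℚ (Set.range γ) ≤ LinearMap.ker φ := by
        rw [Submodule.span_le]
        rintro _ ⟨j, rfl⟩
        exact hφγ j
      exact hle hw
    exact hφw this
end

section
/- Let T = [[1,1],[0,1]] ∈ SL(2, ℤ), so that T⁴ = [[1,4],[0,1]]. Then the normal closure of {T⁴} in SL(2, ℤ), i.e. the subgroup generated by all conjugates B T⁴ B⁻¹ with B ∈ SL(2, ℤ), equals the principal congruence subgroup Γ(4) = {A ∈ SL(2, ℤ) : A ≡ I (mod 4)}. -/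
open Matrix MatrixGroups CongruenceSubgroup

private lemma wms_T_eq (T : SL(2, ℤ)) (hT : (T : Matrix (Fin 2) (Fin 2) ℤ) = !![1,1;0,1]) :
    T = ModularGroup.T := by
  apply Subtype.coe_injective
  show (T : Matrix (Fin 2) (Fin 2) ℤ) = (ModularGroup.T : Matrix (Fin 2) (Fin 2) ℤ)
  rw [hT, ModularGroup.coe_T]

private lemma wms_nc_le :
    Subgroup.normalClosure {ModularGroup.T ^ 4} ≤ Gamma 4 := by
  have := Gamma_normal (N := 4)
  apply Subgroup.normalClosure_le_normal
  intro x hx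
  rw [Set.mem_singleton_iff] at hx
  subst hx
  have := CongruenceSubgroup.ModularGroup_T_pow_mem_Gamma 4 4 dvd_rfl
  simpa using this

private lemma wms_entry (A g : SL(2, ℤ)) (p a r c k : ℤ)
    (hgmat : (g : Matrix (Fin 2) (Fin 2) ℤ) = !![p, a; r, c])
    (ha : A 0 0 = a) (hc : A 1 0 = c) :
    ((g * (ModularGroup.T ^ 4) ^ k * g⁻¹ * A : SL(2,ℤ)) :
      Matrix (Fin 2) (Fin 2) ℤ) 1 0 = c + 4 * r * k := by
  have hdet : p * c - a * r = 1 := by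
    have h2 := g.2
    rw [hgmat, Matrix.det_fin_two_of] at h2
    exact h2
  have hTk : ((ModularGroup.T ^ 4) ^ k :  SL(2,ℤ)) = ModularGroup.T ^ ((4:ℤ) * k) := by
    rw [← zpow_natCast ModularGroup.T 4, ← _root_.zpow_mul]
    norm_num
  have hginv : ((g⁻¹ : SL(2,ℤ)) : Matrix (Fin 2) (Fin 2) ℤ) = !![c, -a; -r, p] := by
    rw [Matrix.SpecialLinearGroup.SL2_inv_expl g]
    show (![![g.1 1 1, -g.1 0 1], ![-g.1 1 0, g.1 0 0]] : Matrix (Fin 2) (Fin 2) ℤ) = _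
    ext i j
    fin_cases i <;> fin_cases j <;> simp [hgmat]
  have hcoe : ((g * (ModularGroup.T ^ 4) ^ k * g⁻¹ * A : SL(2,ℤ)) : Matrix (Fin 2) (Fin 2) ℤ)
      = !![p, a; r, c] * !![1, 4*k; 0, 1] * !![c, -a; -r, p] * (A : Matrix (Fin 2) (Fin 2) ℤ) := by
    simp only [Matrix.SpecialLinearGroup.coe_mul, hTk, ModularGroup.coe_T_zpow, hginv, hgmat]
  rw [hcoe, Matrix.mul_fin_two, Matrix.mul_fin_two, Matrix.mul_apply, Fin.sum_univ_two]
  simp only [Matrix.cons_val', Matrix.cons_val_zero, Matrix.cons_val_one, Matrix.head_cons,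
    Matrix.head_fin_const, Matrix.empty_val', Matrix.cons_val_fin_one, Matrix.of_apply]
  rw [ha, hc]
  linear_combination (4 * k * r + c) * hdet

private lemma wms_main : ∀ n : ℕ, ∀ A : SL(2, ℤ), A ∈ Gamma 4 → (A 1 0).natAbs ≤ n →
    A ∈ Subgroup.normalClosure {ModularGroup.T ^ 4} := by
  intro n
  induction n using Nat.strong_induction_on with
  | _ n ih =>
    intro A hA hn
    set N := Subgroup.normalClosure {ModularGroup.T ^ 4} with hN
    have hT4 : ModularGroup.T ^ 4 ∈ N := Subgroup.subset_normalClosure (Set.mem_singleton _)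
    -- congruences
    rw [Gamma_mem] at hA
    obtain ⟨h1, h2, h3, h4⟩ := hA
    have ha4 : (4:ℤ) ∣ (A 0 0 - 1) := by
      have : ((A 0 0 - 1 : ℤ) : ZMod 4) = 0 := by push_cast [h1]; ring
      exact_mod_cast (ZMod.intCast_zmod_eq_zero_iff_dvd _ 4).mp this
    have hb4 : (4:ℤ) ∣ A 0 1 := by
      exact_mod_cast (ZMod.intCast_zmod_eq_zero_iff_dvd _ 4).mp h2
    have hc4 : (4:ℤ) ∣ A 1 0 := by
      exact_mod_cast (ZMod.intCast_zmod_eq_zero_iff_dvd _ 4).mp h3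
    have hdet : A 0 0 * A 1 1 - A 0 1 * A 1 0 = 1 := by
      have := A.2; rwa [Matrix.det_fin_two] at this
    set a := A 0 0 with hadef
    set b := A 0 1 with hbdef
    set c := A 1 0 with hcdef
    set d := A 1 1 with hddef
    by_cases hc0 : c = 0
    · -- base case: upper triangular
      have had : a * d = 1 := by rw [← hdet, hc0]; ring
      have ha1 : a = 1 := by
        rcases Int.isUnit_iff.mp (IsUnit.of_mul_eq_one _ had) with h | h <;> omega
      have hd1 : d = 1 := by rw [ha1] at had; linarith
      obtain ⟨m, hm⟩ := hb4
      have key : A = (ModularGroup.T ^ 4) ^ m := by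
        apply Subtype.coe_injective
        show (A : Matrix (Fin 2) (Fin 2) ℤ) =
          (((ModularGroup.T ^ 4) ^ m : SL(2,ℤ)) : Matrix (Fin 2) (Fin 2) ℤ)
        have hz : ((ModularGroup.T ^ 4) ^ m : SL(2,ℤ)) = ModularGroup.T ^ ((4:ℤ) * m) := by
          rw [← zpow_natCast ModularGroup.T 4, ← _root_.zpow_mul]; norm_num
        rw [hz, ModularGroup.coe_T_zpow]
        have e : (A : Matrix (Fin 2) (Fin 2) ℤ) = !![a, b; c, d] := by
          ext i j
          fin_cases i <;> fin_cases j <;> rfl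
        rw [e, ha1, hm, hc0, hd1]
      rw [key]
      exact Subgroup.zpow_mem _ hT4 m
    · -- inductive step
      set r : ℤ := Int.bmod (-d) c.natAbs with hrdef
      have hcdvd : (c : ℤ) ∣ r + d := by
        have h := Int.dvd_bmod_sub_self (x := -d) (m := c.natAbs)
        rw [Int.natAbs_dvd] at h
        simpa [hrdef, sub_neg_eq_add] using h
      have hrc : c ∣ r * a + 1 := by
        have heq : r * a + 1 = (r + d) * a - b * c := by linear_combination -hdet
        rw [heq]
        exact dvd_sub (hcdvd.mul_right a) (dvd_mul_left c b)
      have hcabs : 0 < c.natAbs := Int.natAbs_pos.mpr hc0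
      obtain ⟨c1, hcc1⟩ := hc4
      have hrne : r ≠ 0 := by
        intro h0
        rw [h0, zero_mul, zero_add] at hrc
        have h := Int.natAbs_dvd_natAbs.mpr hrc
        simp at h
        omega
      have hrle : -(((c.natAbs : ℤ))/2) ≤ r := Int.le_bmod hcabs
      have hrlt : r < ((c.natAbs : ℤ) + 1)/2 := by
        have := Int.bmod_lt (x := -d) hcabs
        simpa [hrdef] using this
      have h2r : 2 * r.natAbs ≤ c.natAbs := by omega
      set c' : ℤ := Int.bmod c (4 * r.natAbs) with hc'def
      have hm0 : 0 < 4 * r.natAbs := by omega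
      have hc'le : -(((4 * r.natAbs : ℕ) : ℤ)/2) ≤ c' := Int.le_bmod hm0
      have hc'lt : c' < (((4 * r.natAbs : ℕ) : ℤ) + 1)/2 := by
        have := Int.bmod_lt (x := c) hm0
        simpa [hc'def] using this
      have habs : c'.natAbs ≤ 2 * r.natAbs := by omega
      have hdvd4r : (4 * r) ∣ c' - c := by
        have h := Int.dvd_bmod_sub_self (x := c) (m := 4 * r.natAbs)
        have : ((4 * r.natAbs : ℕ) : ℤ) = ((4 * r).natAbs : ℤ) := by
          simp [Int.natAbs_mul]
        rw [this, Int.natAbs_dvd] at h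
        exact h
      -- strict decrease
      have hlt : c'.natAbs < c.natAbs := by
        by_contra hge
        have heq2 : c.natAbs = 2 * r.natAbs := by omega
        have hcc : c = 2 * r ∨ c = -(2 * r) := by
          have : c.natAbs = (2 * r).natAbs := by simp [Int.natAbs_mul]; omega
          rcases Int.natAbs_eq_natAbs_iff.mp this with h | h
          · left; exact h
          · right; exact h
        have hc2 : c ∣ 2 := by
          have h2ra : c ∣ 2 * (r * a + 1) := Dvd.dvd.mul_left hrc 2
          rcases hcc with h | h
          · have : (2:ℤ) * (r * a + 1) = c * a + 2 := by rw [h]; ring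
            rw [this] at h2ra
            exact (dvd_add_right (Dvd.intro a rfl)).mp h2ra
          · have : (2:ℤ) * (r * a + 1) = c * (-a) + 2 := by rw [h]; ring
            rw [this] at h2ra
            exact (dvd_add_right (Dvd.intro (-a) rfl)).mp h2ra
        have h2' : c.natAbs ≤ 2 := by
          have h := Int.natAbs_dvd_natAbs.mpr hc2
          exact Nat.le_of_dvd (by norm_num) h
        omega
      set k : ℤ := (c' - c) / (4 * r) with hkdef
      have hk : 4 * r * k = c' - c := Int.mul_ediv_cancel' hdvd4r
      set p : ℤ := (r * a + 1) / c with hpdef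
      have hp : c * p = r * a + 1 := Int.mul_ediv_cancel' hrc
      have hdet2 : p * c - a * r = 1 := by linear_combination hp
      set g : SL(2,ℤ) := ⟨!![p, a; r, c], by rw [Matrix.det_fin_two_of]; linarith⟩ with hg
      have hgmat : (g : Matrix (Fin 2) (Fin 2) ℤ) = !![p, a; r, c] := rfl
      set E : SL(2,ℤ) := g * (ModularGroup.T ^ 4) ^ k * g⁻¹ with hE
      have hEN : E ∈ N := by
        exact Subgroup.Normal.conj_mem Subgroup.normalClosure_normal _
          (Subgroup.zpow_mem _ hT4 k) g
      have hEG : E ∈ Gamma 4 := wms_nc_le hEN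
      have hAG : A ∈ Gamma 4 := by
        rw [Gamma_mem]; exact ⟨h1, h2, h3, h4⟩
      have hEAG : E * A ∈ Gamma 4 := Subgroup.mul_mem _ hEG hAG
      have hEA10 : (E * A) 1 0 = c' := by
        have h := wms_entry A g p a r c k hgmat rfl rfl
        show ((E * A : SL(2,ℤ)) : Matrix (Fin 2) (Fin 2) ℤ) 1 0 = c'
        rw [hE, h]
        linarith [hk]
      have hEAN : E * A ∈ N := by
        apply ih c'.natAbs (lt_of_lt_of_le hlt hn) (E * A) hEAG
        rw [hEA10]
      have : A = E⁻¹ * (E * A) := by group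
      rw [this]
      exact Subgroup.mul_mem _ (Subgroup.inv_mem _ hEN) hEAN

/-- Group-theoretic content of Proposition 6.1 (eierlegende Wollmilchsau): for
`T = [[1,1],[0,1]] ∈ SL(2,ℤ)` one has `T⁴ = [[1,4],[0,1]]`, and the normal closure
of `{T⁴}` in `SL(2,ℤ)` (the subgroup generated by all conjugates `B T⁴ B⁻¹`)
equals the principal congruence subgroup `Γ(4)`. -/
theorem normalClosure_T_pow_four_eq_Gamma_four
    (T : Matrix.SpecialLinearGroup (Fin 2) ℤ)
    (hT : (T : Matrix (Fin 2) (Fin 2) ℤ) = !![1, 1; 0, 1]) :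
    ((T ^ 4 : Matrix.SpecialLinearGroup (Fin 2) ℤ) : Matrix (Fin 2) (Fin 2) ℤ)
        = !![1, 4; 0, 1] ∧
    Subgroup.normalClosure {T ^ 4} = CongruenceSubgroup.Gamma 4 := by
  have hTT : T = ModularGroup.T := wms_T_eq T hT
  subst hTT
  constructor
  · have hz : (ModularGroup.T ^ 4 : SL(2,ℤ)) = ModularGroup.T ^ ((4:ℤ)) := by
      rw [← zpow_natCast ModularGroup.T 4]
      norm_num
    rw [hz, ModularGroup.coe_T_zpow]
  · apply le_antisymm wms_nc_le
    intro A hA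
    exact wms_main (A 1 0).natAbs A hA le_rfl
end

section
/- Let W be a torsion-free ℤ-module, f an automorphism of W with (f − id) ∘ (f − id) = 0, and w ∈ W an element with f(w) ≠ w. Then for every nonzero integer k one has f^k(w) ≠ w and f^k(w) ≠ −w. Consequently, if G is a group of automorphisms of W containing f, then the subgroup H = {g ∈ G : g(w) = w or g(w) = −w} contains no nonzero power of f and therefore has infinite index in G. -/
/-- Abstract content of Corollary 5.3: if `W` is a torsion-free ℤ-module, `f` an
automorphism of `W` with `(f - id) ∘ (f - id) = 0` and `f w ≠ w`, then `f ^ k w ≠ ± w`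
for every nonzero integer `k`; consequently, for any group `G` of automorphisms of
`W` containing `f`, the subgroup `H = {g : g w = w or g w = -w}` contains no nonzero
power of `f` and has infinite index in `G`. -/
theorem infinite_index_of_multitwist_not_fixing
    {W : Type*} [AddCommGroup W] [Module ℤ W] [NoZeroSMulDivisors ℤ W]
    (f : W ≃ₗ[ℤ] W)
    (hf2 : ((f : W →ₗ[ℤ] W) - LinearMap.id) ∘ₗ ((f : W →ₗ[ℤ] W) - LinearMap.id) = 0)
    (w : W) (hw : f w ≠ w) :
    (∀ k : ℤ, k ≠ 0 → (f ^ k) w ≠ w ∧ (f ^ k) w ≠ -w) ∧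
    ∀ G H : Subgroup (W ≃ₗ[ℤ] W), f ∈ G →
      (H : Set (W ≃ₗ[ℤ] W)) = {g : W ≃ₗ[ℤ] W | g w = w ∨ g w = -w} →
      (∀ k : ℤ, k ≠ 0 → f ^ k ∉ H) ∧ H.relIndex G = 0 := by
  set u : W := f w - w with hu_def
  have hu : u ≠ 0 := sub_ne_zero.mpr hw
  have hfu : f u = u := by
    have := congrArg (fun g : W →ₗ[ℤ] W => g w) hf2
    simp only [LinearMap.comp_apply, LinearMap.sub_apply, LinearMap.id_apply,
      LinearMap.zero_apply, LinearEquiv.coe_coe, map_sub] at this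
    have : f (f w - w) - (f w - w) = 0 := by rw [map_sub]; exact this
    exact sub_eq_zero.mp this
  have hfinvu : f⁻¹ u = u := by
    apply f.injective
    rw [hfu]
    exact f.apply_symm_apply u
  have hku : ∀ k : ℤ, (f ^ k) u = u := by
    intro k
    induction k using Int.induction_on with
    | zero => simp
    | succ n ih =>
      rw [zpow_add_one]
      have : (f ^ (n : ℤ) * f) u = (f ^ (n : ℤ)) (f u) := rfl
      rw [this, hfu, ih]
    | pred n ih =>
      rw [zpow_sub_one]
      have : (f ^ (-n : ℤ) * f⁻¹) u = (f ^ (-n : ℤ)) (f⁻¹ u) := rfl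
      rw [this, hfinvu, ih]
  have key : ∀ k : ℤ, (f ^ k) w = w + k • u := by
    intro k
    induction k using Int.induction_on with
    | zero => simp
    | succ n ih =>
      rw [zpow_add_one]
      have h1 : (f ^ (n : ℤ) * f) w = (f ^ (n : ℤ)) (f w) := rfl
      have h2 : f w = w + u := by rw [hu_def]; abel
      rw [h1, h2, map_add, ih, hku, add_zsmul, one_zsmul]
      abel
    | pred n ih =>
      rw [zpow_sub_one]
      have h1 : (f ^ (-n : ℤ) * f⁻¹) w = (f ^ (-n : ℤ)) (f⁻¹ w) := rfl
      have h2 : f⁻¹ w = w - u := by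
        apply f.injective
        rw [map_sub]
        have : f (f⁻¹ w) = w := f.apply_symm_apply w
        rw [this, hfu, hu_def]
        abel
      rw [h1, h2, map_sub, ih, hku, sub_zsmul, one_zsmul]
      abel
  have main : ∀ k : ℤ, k ≠ 0 → (f ^ k) w ≠ w ∧ (f ^ k) w ≠ -w := by
    intro k hk
    constructor
    · intro h
      rw [key] at h
      have : k • u = 0 := by
        have := sub_eq_zero.mpr h
        simpa using this
      rcases (‹NoZeroSMulDivisors ℤ W›.eq_zero_or_eq_zero_of_smul_eq_zero (c := k) (x := u) this) with h' | h'
      · exact hk h'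
      · exact hu h'
    · intro h
      rw [key] at h
      -- apply f to both sides: f w + k•u = -f w, i.e. (w+u) + k•u = -(w+u)
      have h2 : f (w + k • u) = f (-w) := congrArg f h
      rw [map_add, map_neg, map_zsmul, hfu] at h2
      have hfw : f w = w + u := by rw [hu_def]; abel
      rw [hfw] at h2
      -- h : w + k•u = -w ; h2 : (w+u) + k•u = -(w+u)
      have hcalc : (w + u + k • u) - (w + k • u) = (-(w + u)) - (-w) := by
        rw [h, h2]
      have huu : u + u = 0 := by
        have h' : u = -u := by
          calc u = (w + u + k • u) - (w + k • u) := by abel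
            _ = (-(w + u)) - (-w) := hcalc
            _ = -u := by abel
        exact add_eq_zero_iff_eq_neg.mpr h'
      have : (2 : ℤ) • u = 0 := by rw [two_zsmul]; exact huu
      rcases (‹NoZeroSMulDivisors ℤ W›.eq_zero_or_eq_zero_of_smul_eq_zero (c := 2) (x := u) this) with h' | h'
      · norm_num at h'
      · exact hu h'
  refine ⟨main, ?_⟩
  intro G H hfG hH
  have hnot : ∀ k : ℤ, k ≠ 0 → f ^ k ∉ H := by
    intro k hk hmem
    have : f ^ k ∈ (H : Set (W ≃ₗ[ℤ] W)) := hmem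
    rw [hH] at this
    rcases this with h | h
    · exact (main k hk).1 h
    · exact (main k hk).2 h
  refine ⟨hnot, ?_⟩
  by_contra hrel
  obtain ⟨n, hn0, -, hmem⟩ := Subgroup.exists_pow_mem_of_relIndex_ne_zero hrel hfG
  have : f ^ (n : ℤ) ∈ H := by
    rw [zpow_natCast]
    exact hmem.1
  exact hnot n (by exact_mod_cast hn0.ne') this
end
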